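/- arXiv:2012.01986 — 2 statements merged into one kernel-verified Lean document; each statement's English description precedes it below -/
import Mathlib

section
/- Let N, R, K ≥ 1 be integers. Let d : Fin K → (Fin R → ℝ) be synthesis filters, let e₁, e₂ : Fin K → (Fin R → ℝ) be analysis filters, let a : Fin K → ℝ be thresholds, and let x₁, x₂ : ZMod N → ℝ. Define D ∈ Matrix (Fin R) (Fin K) ℝ by D_{r,k} = d_k r and E₁, E₂ ∈ Matrix (Fin K) (Fin R) ℝ by (E_m)_{k,r} = (e_m)_k r. Then for every t ∈ ZMod N, ∑_{k < K} ( d_k ⋆* (fun j => T_{a k}( (e₁ₖ ⋆ x₁)_j + (e₂ₖ ⋆ x₂)_j )) )_t = ∑_{j ∈ ZMod N} ( P_jᵀ ( D · (fun k => T_{a k}( (E₁ (P_j x₁))_k + (E₂ (P_j x₂))_k )) ) )_t. -/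
open Matrix

/-- Cyclic patch-extraction matrix: `(P_j)_{r,t} = 1` if `t = j + r`, else `0`. -/
noncomputable def patchMat (N R : ℕ) (j : ZMod N) : Matrix (Fin R) (ZMod N) ℝ :=
  Matrix.of fun r t => if t = j + ((r : ℕ) : ZMod N) then 1 else 0

/-- Circular correlation: `(e ⋆ x)_j = ∑_r e_r x_{j+r}`. -/
noncomputable def circCorr (N R : ℕ) (e : Fin R → ℝ) (x : ZMod N → ℝ) : ZMod N → ℝ :=
  fun j => ∑ r : Fin R, e r * x (j + ((r : ℕ) : ZMod N))

/-- Adjoint circular convolution: `(d ⋆* v)_t = ∑_r d_r v_{t-r}`. -/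
noncomputable def circAdj (N R : ℕ) (d : Fin R → ℝ) (v : ZMod N → ℝ) : ZMod N → ℝ :=
  fun t => ∑ r : Fin R, d r * v (t - ((r : ℕ) : ZMod N))

/-- Soft-thresholding: `T_a(t) = sign(t) · max(|t| - a, 0)`. -/
noncomputable def softT (a t : ℝ) : ℝ := Real.sign t * max (|t| - a) 0

lemma patch_mulVec (N R : ℕ) [NeZero N] (j : ZMod N) (x : ZMod N → ℝ) (r : Fin R) :
    (patchMat N R j).mulVec x r = x (j + ((r : ℕ) : ZMod N)) := by
  simp [patchMat, Matrix.mulVec, dotProduct, ite_mul]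

/-- Equation (S.d11): the convolutional expression for one output row of a
cross-material refiner equals its patch-based form. -/
theorem conv_refiner_row_eq_patch (N R K : ℕ) [NeZero N] (hR : 1 ≤ R) (hK : 1 ≤ K)
    (d e₁ e₂ : Fin K → Fin R → ℝ) (a : Fin K → ℝ) (x₁ x₂ : ZMod N → ℝ) :
    ∀ t : ZMod N,
      (∑ k : Fin K,
          circAdj N R (d k)
            (fun j => softT (a k)
              (circCorr N R (e₁ k) x₁ j + circCorr N R (e₂ k) x₂ j)) t)
        = ∑ j : ZMod N,
            (patchMat N R j)ᵀ.mulVec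
              ((Matrix.of fun r k => d k r : Matrix (Fin R) (Fin K) ℝ).mulVec
                (fun k => softT (a k)
                  ((Matrix.of e₁ : Matrix (Fin K) (Fin R) ℝ).mulVec
                      ((patchMat N R j).mulVec x₁) k
                    + (Matrix.of e₂ : Matrix (Fin K) (Fin R) ℝ).mulVec
                        ((patchMat N R j).mulVec x₂) k))) t := by
  intro t
  have key : ∀ j : ZMod N, ∀ k : Fin K,
      ((Matrix.of e₁ : Matrix (Fin K) (Fin R) ℝ).mulVec ((patchMat N R j).mulVec x₁) k
        + (Matrix.of e₂ : Matrix (Fin K) (Fin R) ℝ).mulVec ((patchMat N R j).mulVec x₂) k)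
      = circCorr N R (e₁ k) x₁ j + circCorr N R (e₂ k) x₂ j := by
    intro j k
    simp [Matrix.mulVec, dotProduct, circCorr, patchMat, ite_mul]
  simp only [Matrix.mulVec, Matrix.transpose_apply, dotProduct, patchMat, Matrix.of_apply, key]
  rw [Finset.sum_comm]
  simp only [ite_mul, one_mul, zero_mul]
  have hc : ∀ (r : Fin R) (j : ZMod N),
      (t = j + ((r:ℕ) : ZMod N)) ↔ (j = t - ((r:ℕ):ZMod N)) := by
    intro r j
    rw [eq_sub_iff_add_eq, eq_comm]
  simp only [hc, Finset.sum_ite_eq', Finset.mem_univ, if_true]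
  rw [Finset.sum_comm]
  simp [circCorr, circAdj]
end

section
/- (Proposition S.1, distinct cross-material refiner equivalence.) Let N, R, K ≥ 1 be integers. For m, n ∈ Fin 2 let D_{m,n} ∈ Matrix (Fin R) (Fin K) ℝ and E_{n,m} ∈ Matrix (Fin K) (Fin R) ℝ, let α : Fin 2 → Fin K → ℝ be thresholds, and let x₁, x₂ : ZMod N → ℝ be two material images. For each m, n, k define the synthesis filter d_{m,n,k} : Fin R → ℝ by d_{m,n,k}(r) = (D_{m,n})_{r,k} and the analysis filter e_{n,m,k} : Fin R → ℝ by e_{n,m,k}(r) = (E_{n,m})_{k,r}. Then for every output material m ∈ Fin 2 and every t ∈ ZMod N: ∑_{k < K} ∑_{n ∈ Fin 2} ( d_{m,n,k} ⋆* (fun j => T_{exp(α n k)}( ∑_{m' ∈ Fin 2} (e_{n,m',k} ⋆ x_{m'})_j )) )_t = ∑_{j ∈ ZMod N} ( P_jᵀ ( ∑_{n ∈ Fin 2} D_{m,n} · (fun k => T_{exp(α n k)}( ∑_{m' ∈ Fin 2} (E_{n,m'} (P_j x_{m'}))_k )) ) )_t. In block form, the convolutional cross-material CNN refiner applied to (x₁,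 x₂) equals the patch-based mapping ∑_j P̄_jᵀ D T_{exp(α)}(E P̄_j x) with P̄_j x = (P_j x₁, P_j x₂). -/
open Matrix

/-- Proposition S.1: the convolutional distinct cross-material CNN refiner applied to
`(x 0, x 1)` equals the patch-based mapping `∑_j P̄_jᵀ D T_{exp(α)}(E P̄_j x)`. -/
theorem distinct_cross_material_refiner_eq_patch (N R K : ℕ) [NeZero N]
    (hR : 1 ≤ R) (hK : 1 ≤ K)
    (D : Fin 2 → Fin 2 → Matrix (Fin R) (Fin K) ℝ)
    (E : Fin 2 → Fin 2 → Matrix (Fin K) (Fin R) ℝ)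
    (α : Fin 2 → Fin K → ℝ) (x : Fin 2 → ZMod N → ℝ) :
    ∀ (m : Fin 2) (t : ZMod N),
      (∑ k : Fin K, ∑ n : Fin 2,
          circAdj N R (fun r => D m n r k)
            (fun j => softT (Real.exp (α n k))
              (∑ m' : Fin 2, circCorr N R (fun r => E n m' k r) (x m') j)) t)
        = ∑ j : ZMod N,
            (patchMat N R j)ᵀ.mulVec
              (∑ n : Fin 2, (D m n).mulVec
                (fun k => softT (Real.exp (α n k))
                  (∑ m' : Fin 2,
                    (E n m').mulVec ((patchMat N R j).mulVec (x m')) k))) t := by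
  intro m t
  have key : ∀ (j : ZMod N),
      (patchMat N R j)ᵀ.mulVec
        (∑ n : Fin 2, (D m n).mulVec
          (fun k => softT (Real.exp (α n k))
            (∑ m' : Fin 2,
              (E n m').mulVec ((patchMat N R j).mulVec (x m')) k))) t
      = ∑ r : Fin R, (if t = j + ((r:ℕ) : ZMod N) then
          ∑ n : Fin 2, ∑ k : Fin K, D m n r k * softT (Real.exp (α n k))
            (∑ m' : Fin 2, circCorr N R (fun r' => E n m' k r') (x m') j) else 0) := by
    intro j
    simp only [mulVec, dotProduct, transpose_apply, patchMat, Matrix.of_apply,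
      ite_mul, one_mul, zero_mul, Finset.sum_apply, Pi.smul_apply]
    refine Finset.sum_congr rfl fun r _ => ?_
    congr 1
    refine Finset.sum_congr rfl fun n _ => Finset.sum_congr rfl fun k _ => ?_
    congr 2
    refine Finset.sum_congr rfl fun m' _ => ?_
    simp [circCorr, mulVec, dotProduct, patchMat, ite_mul, one_mul, zero_mul]
  have step : ∀ r : Fin R,
      (∑ j : ZMod N, if t = j + ((r:ℕ) : ZMod N) then
        ∑ n : Fin 2, ∑ k : Fin K, D m n r k * softT (Real.exp (α n k))
          (∑ m' : Fin 2, circCorr N R (fun r' => E n m' k r') (x m') j) else 0)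
      = ∑ n : Fin 2, ∑ k : Fin K, D m n r k * softT (Real.exp (α n k))
          (∑ m' : Fin 2, circCorr N R (fun r' => E n m' k r') (x m')
            (t - ((r:ℕ) : ZMod N))) := by
    intro r
    rw [Finset.sum_eq_single (t - ((r:ℕ) : ZMod N))]
    · simp
    · intro j _ hj
      rw [if_neg]
      intro h
      exact hj (by rw [h]; ring)
    · simp
  conv_rhs => rw [Finset.sum_congr rfl fun j _ => key j]
  conv_rhs => rw [Finset.sum_comm]
  conv_rhs => rw [Finset.sum_congr rfl fun r _ => step r]
  conv_rhs => rw [Finset.sum_comm]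
  conv_rhs => rw [Finset.sum_congr rfl fun n _ => Finset.sum_comm]
  rw [Finset.sum_comm]
  refine Finset.sum_congr rfl fun n _ => Finset.sum_congr rfl fun k _ => ?_
  simp [circAdj, mul_comm]
end
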